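/- For every nonnegative integer n, every nonnegative integer r, and every real x, one has (x + r)^n = ∑_{k=0}^{n} T_r(n+r, k+r) · x^{[k]}. -/

import Mathlib

/-- The extended `r`-central factorial numbers of the second kind:
`T_r(n+r,k+r) = (1/k!) ∑_{j=0}^{k} (-1)^{k-j} C(k,j) (j + r - k/2)^n`. -/
noncomputable def rcentralT (r n k : ℕ) : ℝ :=
  (1 / (Nat.factorial k : ℝ)) * ∑ j ∈ Finset.range (k + 1),
    (-1 : ℝ) ^ (k - j) * (Nat.choose k j : ℝ) * ((j : ℝ) + (r : ℝ) - (k : ℝ) / 2) ^ n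

/-- The central factorials: `x^{[0]} = 1` and
`x^{[n]} = x ∏_{i=1}^{n-1} (x + n/2 - i)` for `n ≥ 1`. -/
noncomputable def centralFactorial (x : ℝ) : ℕ → ℝ
  | 0 => 1
  | n + 1 => x * ∏ i ∈ Finset.range n, (x + ((n : ℝ) + 1) / 2 - ((i : ℝ) + 1))

/-! The central difference `δ f x = f (x + 1/2) - f (x - 1/2)` acts on central factorials as
the forward difference acts on falling factorials: `δ x^[k+1] = (k+1) x^[k]`, and `x^[k]` vanishes
at `0` for `k ≥ 1`. Subtracting leading terms, every polynomial `p` of degree `≤ n` therefore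
satisfies the central Newton formula `p x = ∑_{k ≤ n} (δ^k p) 0 / k! * x^[k]`. Since
`(δ^k p) 0 = (Δ^k p) (-k/2)`, for `p x = (x + r)^n` the coefficients are `T_r(n+r, k+r)`. -/

open Polynomial Finset
open scoped fwdDiff Nat

theorem natDegree_sub_C_coeff_mul_le {R : Type*} [Ring R] {p q : R[X]} {n : ℕ}
    (hp : p.natDegree ≤ n + 1) (hq : q.Monic) (hqn : q.natDegree = n + 1) :
    (p - C (p.coeff (n + 1)) * q).natDegree ≤ n := by
  rw [natDegree_le_iff_coeff_eq_zero]
  intro N hN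
  rw [coeff_sub, coeff_C_mul]
  rcases (show n + 1 ≤ N from hN).eq_or_lt with rfl | hlt
  · rw [show q.coeff (n + 1) = 1 from hqn ▸ hq.coeff_natDegree, mul_one, sub_self]
  · rw [coeff_eq_zero_of_natDegree_lt (hp.trans_lt hlt),
      coeff_eq_zero_of_natDegree_lt (hqn ▸ hlt : q.natDegree < N), mul_zero, sub_zero]

section

variable (K : Type*) [Field K]

noncomputable def centralFactorialPoly : ℕ → K[X]
  | 0 => 1
  | k + 1 => X * ∏ i ∈ range k, (X + C (((k : K) + 1) / 2 - (i + 1)))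

variable {K}

theorem monic_centralFactorialPoly : ∀ k, (centralFactorialPoly K k).Monic
  | 0 => monic_one
  | _ + 1 => monic_X.mul (monic_prod_of_monic _ _ fun _ _ => monic_X_add_C _)

theorem centralFactorialPoly_natDegree : ∀ k, (centralFactorialPoly K k).natDegree = k
  | 0 => natDegree_one
  | k + 1 => by
    rw [centralFactorialPoly,
      monic_X.natDegree_mul (monic_prod_of_monic _ _ fun _ _ => monic_X_add_C _),
      natDegree_prod_of_monic _ _ fun _ _ => monic_X_add_C _]
    simp only [natDegree_X, natDegree_X_add_C, sum_const, card_range, smul_eq_mul, mul_one]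
    omega

theorem centralFactorialPoly_succ_eval (k : ℕ) (x : K) :
    (centralFactorialPoly K (k + 1)).eval x =
      x * ∏ i ∈ range k, (x + (((k : K) + 1) / 2 - (i + 1))) := by
  simp [centralFactorialPoly, eval_prod]

theorem centralFactorialPoly_eval_zero (k : ℕ) :
    (centralFactorialPoly K k).eval 0 = if k = 0 then 1 else 0 := by
  cases k <;> simp [centralFactorialPoly]

variable [CharZero K]

theorem fwdDiff_centralFactorialPoly_succ_eval (k : ℕ) (y : K) :
    Δ_[1] (centralFactorialPoly K (k + 1)).eval y =
      (k + 1) * (centralFactorialPoly K k).eval (y + 2⁻¹) := by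
  rcases k with _ | m
  · simp [fwdDiff, centralFactorialPoly]
  rw [fwdDiff, centralFactorialPoly_succ_eval, centralFactorialPoly_succ_eval,
    centralFactorialPoly_succ_eval, prod_range_succ', prod_range_succ]
  -- Splitting off the first factor of the product at `y + 1` and the last one at `y` leaves
  -- the same product over `range m` in all three terms.
  push_cast
  ring_nf

theorem fwdDiff_iter_centralFactorialPoly_eval {j k : ℕ} (hjk : j ≤ k) (y : K) :
    Δ_[1] ^[j] (centralFactorialPoly K k).eval y =
      k.descFactorial j * (centralFactorialPoly K (k - j)).eval (y + j / 2) := by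
  induction j generalizing k y with
  | zero => simp
  | succ j ih =>
    obtain ⟨m, rfl⟩ : ∃ m, k = m + 1 := ⟨k - 1, by omega⟩
    have hΔ : Δ_[1] (centralFactorialPoly K (m + 1)).eval =
        ((m + 1 : ℕ) : K) • fun z => (centralFactorialPoly K m).eval (z + 2⁻¹) := by
      ext z
      rw [fwdDiff_centralFactorialPoly_succ_eval, Pi.smul_apply, smul_eq_mul, Nat.cast_succ]
    rw [Function.iterate_succ_apply, hΔ, fwdDiff_iter_const_smul, Pi.smul_apply,
      fwdDiff_iter_comp_add 1 (centralFactorialPoly K m).eval, ih (by omega),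
      Nat.succ_descFactorial_succ, Nat.add_sub_add_right, smul_eq_mul]
    rw [show y + 2⁻¹ + (j : K) / 2 = y + ((j + 1 : ℕ) : K) / 2 by push_cast; ring]
    push_cast
    ring

theorem fwdDiff_iter_centralFactorialPoly_eval_neg_half (j k : ℕ) :
    Δ_[1] ^[j] (centralFactorialPoly K k).eval (-(j / 2)) = if j = k then (k ! : K) else 0 := by
  rcases lt_trichotomy j k with hjk | rfl | hkj
  · rw [fwdDiff_iter_centralFactorialPoly_eval hjk.le, neg_add_cancel,
      centralFactorialPoly_eval_zero]
    simp [hjk.ne, Nat.sub_eq_zero_iff_le, hjk.not_ge]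
  · rw [fwdDiff_iter_centralFactorialPoly_eval le_rfl, neg_add_cancel,
      centralFactorialPoly_eval_zero]
    simp [Nat.descFactorial_self]
  · rw [fwdDiff_iter_eq_zero_of_degree_lt (by rwa [centralFactorialPoly_natDegree])]
    simp [hkj.ne']

theorem sum_fwdDiff_iter_centralFactorialPoly_eval (m : ℕ) (x : K) :
    ∑ k ∈ range (m + 1), Δ_[1] ^[k] (centralFactorialPoly K m).eval (-(k / 2)) / k ! *
      (centralFactorialPoly K k).eval x = (centralFactorialPoly K m).eval x := by
  simp_rw [fwdDiff_iter_centralFactorialPoly_eval_neg_half, ite_div, zero_div, ite_mul, zero_mul]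
  rw [sum_ite_eq', if_pos (self_mem_range_succ m),
    div_self (Nat.cast_ne_zero.mpr m.factorial_ne_zero), one_mul]

theorem eval_eq_sum_fwdDiff_iter_mul_centralFactorialPoly_eval {p : K[X]} {n : ℕ}
    (hp : p.natDegree ≤ n) (x : K) :
    p.eval x = ∑ k ∈ range (n + 1),
      Δ_[1] ^[k] p.eval (-(k / 2)) / k ! * (centralFactorialPoly K k).eval x := by
  induction n generalizing p with
  | zero =>
    rw [eq_C_of_natDegree_le_zero hp]
    simp [centralFactorialPoly]
  | succ n ih =>
    set c := p.coeff (n + 1)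
    set q := p - C c * centralFactorialPoly K (n + 1)
    have hq : q.natDegree ≤ n := natDegree_sub_C_coeff_mul_le hp (monic_centralFactorialPoly _)
      (centralFactorialPoly_natDegree _)
    have hcoeff : ∀ k, Δ_[1] ^[k] p.eval (-(k / 2)) = Δ_[1] ^[k] q.eval (-(k / 2)) +
        c * Δ_[1] ^[k] (centralFactorialPoly K (n + 1)).eval (-(k / 2)) := by
      have hpq : p.eval = q.eval + c • (centralFactorialPoly K (n + 1)).eval := by
        ext y
        simp [q]
      intro k
      rw [hpq, fwdDiff_iter_add, fwdDiff_iter_const_smul]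
      rfl
    simp_rw [hcoeff, add_div, add_mul, sum_add_distrib, mul_div_assoc, mul_assoc, ← mul_sum,
      sum_fwdDiff_iter_centralFactorialPoly_eval, sum_range_succ _ (n + 1),
      fwdDiff_iter_eq_zero_of_degree_lt (Nat.lt_succ_of_le hq), ← ih hq]
    simp [q]

end

theorem centralFactorialPoly_eval (x : ℝ) :
    ∀ k, (centralFactorialPoly ℝ k).eval x = centralFactorial x k
  | 0 => by simp [centralFactorialPoly, centralFactorial]
  | k + 1 => by
    rw [centralFactorialPoly_succ_eval, centralFactorial]
    simp only [add_sub_assoc]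

theorem rcentralT_eq_fwdDiff_iter (r n k : ℕ) :
    rcentralT r n k = Δ_[1] ^[k] (fun y : ℝ => (y + r) ^ n) (-(k / 2)) / k ! := by
  rw [fwdDiff_iter_eq_sum_shift (1 : ℝ), rcentralT, one_div, inv_mul_eq_div]
  congr 1
  refine sum_congr rfl fun j _ => ?_
  rw [zsmul_eq_mul, nsmul_eq_mul]
  push_cast
  ring

/-- For every nonnegative integer `n`, nonnegative integer `r` and real `x`:
`(x + r)^n = ∑_{k=0}^{n} T_r(n+r, k+r) x^{[k]}`. -/
theorem pow_eq_sum_rcentralT_centralFactorial (n r : ℕ) (x : ℝ) :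
    (x + (r : ℝ)) ^ n =
      ∑ k ∈ Finset.range (n + 1), rcentralT r n k * centralFactorial x k := by
  have hdeg : ((X + C (r : ℝ)) ^ n).natDegree ≤ n := by
    rw [natDegree_pow, natDegree_X_add_C, mul_one]
  have hnewton := eval_eq_sum_fwdDiff_iter_mul_centralFactorialPoly_eval hdeg x
  simp only [eval_pow, eval_add, eval_X, eval_C, centralFactorialPoly_eval] at hnewton
  simp only [hnewton, rcentralT_eq_fwdDiff_iter]
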